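/- arXiv:1804.02884 — 2 statements merged into one kernel-verified Lean document; each statement's English description precedes it below -/
import Mathlib

section
/- Let A be finite, π^m(·|θ) strictly positive probability distributions over A for m = 1,...,M, each differentiable in θ, and let P(a|θ) = ∏_{m=1}^M π^m(a^m|θ) on A^M. Let f(a) = ∑_{m=1}^M f^m(a^m) for functions f^m : A → ℝ. Then ∑_{a} P(a|θ) · (d/dθ log P(a|θ)) · f(a) = ∑_{m=1}^M ∑_{a^m ∈ A} π^m(a^m|θ) · (d/dθ log π^m(a^m|θ)) · f^m(a^m). -/
theorem stmt6 {A : Type*} [Fintype A] (M : ℕ)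
    (p : Fin M → ℝ → A → ℝ) (θ₀ : ℝ) (f : Fin M → A → ℝ)
    (hpos : ∀ m θ j, 0 < p m θ j)
    (hsum : ∀ m θ, ∑ j, p m θ j = 1)
    (hdiff : ∀ m j, DifferentiableAt ℝ (fun θ => p m θ j) θ₀) :
    ∑ a : Fin M → A,
        (∏ m, p m θ₀ (a m))
          * deriv (fun θ => Real.log (∏ m, p m θ (a m))) θ₀
          * (∑ m, f m (a m))
      = ∑ m, ∑ j, p m θ₀ j * deriv (fun θ => Real.log (p m θ j)) θ₀ * f m j := by
  classical
  set g : Fin M → A → ℝ := fun m j => deriv (fun θ => p m θ j) θ₀ with hg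
  have hlog : ∀ m j, HasDerivAt (fun θ => Real.log (p m θ j)) (g m j / p m θ₀ j) θ₀ :=
    fun m j => ((hdiff m j).hasDerivAt).log (ne_of_gt (hpos m θ₀ j))
  have hgsum : ∀ m, ∑ j, g m j = 0 := by
    intro m
    have h1 : (fun θ => ∑ j, p m θ j) = fun _ => (1 : ℝ) := funext (hsum m)
    have h2 : deriv (fun θ => ∑ j, p m θ j) θ₀ = 0 := by rw [h1]; simp
    rw [← h2, deriv_fun_sum (fun j _ => hdiff m j)]
  have hprod : ∀ a : Fin M → A,
      deriv (fun θ => Real.log (∏ m, p m θ (a m))) θ₀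
        = ∑ m, g m (a m) / p m θ₀ (a m) := by
    intro a
    have heq : (fun θ => Real.log (∏ m, p m θ (a m)))
        = fun θ => ∑ m, Real.log (p m θ (a m)) := by
      funext θ
      exact Real.log_prod (fun m _ => ne_of_gt (hpos m θ (a m)))
    rw [heq, deriv_fun_sum (fun m _ => (hlog m (a m)).differentiableAt)]
    exact Finset.sum_congr rfl fun m _ => (hlog m (a m)).deriv
  have key : ∀ (m k : Fin M),
      ∑ a : Fin M → A, (∏ n, p n θ₀ (a n)) * (g m (a m) / p m θ₀ (a m)) * f k (a k)
        = if m = k then ∑ j, g m j * f m j else 0 := by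
    intro m k
    have hfac : ∀ a : Fin M → A,
        (∏ n, p n θ₀ (a n)) * (g m (a m) / p m θ₀ (a m)) * f k (a k)
          = ∏ n, ((if n = m then g n (a n) else p n θ₀ (a n))
              * (if n = k then f n (a n) else 1)) := by
      intro a
      have h2 : (∏ x : Fin M, if x = k then f x (a x) else (1:ℝ)) = f k (a k) := by
        rw [Finset.prod_ite_eq' Finset.univ k (fun n => f n (a n))]
        simp
      have h1 : (∏ x : Fin M, if x = m then g x (a x) else p x θ₀ (a x))
          = g m (a m) * ∏ x ∈ Finset.univ.erase m, p x θ₀ (a x) := by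
        rw [← Finset.mul_prod_erase Finset.univ _ (Finset.mem_univ m)]
        simp only [if_pos rfl]
        congr 1
        exact Finset.prod_congr rfl fun x hx => if_neg (Finset.ne_of_mem_erase hx)
      have h3 : (∏ n, p n θ₀ (a n))
          = p m θ₀ (a m) * ∏ x ∈ Finset.univ.erase m, p x θ₀ (a x) :=
        (Finset.mul_prod_erase Finset.univ _ (Finset.mem_univ m)).symm
      rw [Finset.prod_mul_distrib, h1, h2, h3]
      field_simp [ne_of_gt (hpos m θ₀ (a m))]
    rw [Finset.sum_congr rfl fun a _ => hfac a,
        ← Fintype.prod_sum (fun n j => ((if n = m then g n j else p n θ₀ j)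
            * (if n = k then f n j else 1)))]
    by_cases hmk : m = k
    · subst hmk
      rw [if_pos rfl]
      rw [Finset.prod_eq_single m]
      · simp
      · intro n _ hn
        simp only [if_neg hn]
        simp [hsum n θ₀]
      · simp
    · rw [if_neg hmk]
      apply Finset.prod_eq_zero (Finset.mem_univ m)
      simp only [if_pos rfl, if_neg hmk, mul_one]
      exact hgsum m
  calc ∑ a : Fin M → A, (∏ m, p m θ₀ (a m))
          * deriv (fun θ => Real.log (∏ m, p m θ (a m))) θ₀ * (∑ m, f m (a m))
      = ∑ a : Fin M → A, ∑ m, ∑ k,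
          (∏ n, p n θ₀ (a n)) * (g m (a m) / p m θ₀ (a m)) * f k (a k) := by
        refine Finset.sum_congr rfl fun a _ => ?_
        rw [hprod a]
        simp only [Finset.mul_sum, Finset.sum_mul]
        exact Finset.sum_comm
    _ = ∑ m, ∑ k, ∑ a : Fin M → A,
          (∏ n, p n θ₀ (a n)) * (g m (a m) / p m θ₀ (a m)) * f k (a k) := by
        rw [Finset.sum_comm]
        exact Finset.sum_congr rfl fun m _ => Finset.sum_comm
    _ = ∑ m, ∑ k, if m = k then ∑ j, g m j * f m j else 0 := by
        exact Finset.sum_congr rfl fun m _ => Finset.sum_congr rfl fun k _ => key m k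
    _ = ∑ m, ∑ j, g m j * f m j := by
        refine Finset.sum_congr rfl fun m _ => ?_
        simp
    _ = ∑ m, ∑ j, p m θ₀ j * deriv (fun θ => Real.log (p m θ j)) θ₀ * f m j := by
        refine Finset.sum_congr rfl fun m _ => Finset.sum_congr rfl fun j _ => ?_
        rw [(hlog m j).deriv]
        field_simp [ne_of_gt (hpos m θ₀ j)]
end

section
/- For the backward recursion V_H(i,j) = r_H(i,j) and V_t(i,j) = r_t(i,j) + ∑_{i',j'} φ_t(i'|i,j) π_{t+1}(j'|i') V_{t+1}(i',j') where φ_t(·|i,j) and π_{t+1}(·|i') are probability distributions, and counts satisfying n_t(i,j) = ∑_{i'} n_t(i,j,i'), n_{t+1}(i') = ∑_{i,j} n_t(i,j,i'), n_{t+1}(i',j') = n_{t+1}(i') π_{t+1}(j'|i'), and φ_t(i'|i,j) = n_t(i,j,i')/n_t(i,j): the count-weighted value ∑_{i,j} n_t(i,j) V_t(i,j) equals ∑_{t'=t}^H ∑_{i,j} n_{t'}(i,j) r_{t'}(i,j). -/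
/-!
Multiplying the Bellman recursion at time `t` by `n_t(i,j)` cancels the normalisation of
`φ_t`, so the continuation term becomes `∑ n_t(i,j,i') π_{t+1}(j'|i') V_{t+1}(i',j')`.
Summing over `(i,j)` first and using the flow conservation `n_{t+1}(i') = ∑_{i,j} n_t(i,j,i')`
together with `n_{t+1}(i',j') = n_{t+1}(i') π_{t+1}(j'|i')` turns it into the count-weighted
value at time `t + 1`. Hence the count-weighted value at `t` is the count-weighted reward at
`t` plus the count-weighted value at `t + 1`, and the claim telescopes down from `H`.
-/

open Finset

theorem Fintype.sum_sum_sum_sum_comm {α β γ δ M : Type*} [Fintype α] [Fintype β] [Fintype γ]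
    [Fintype δ] [AddCommMonoid M] (f : α → β → γ → δ → M) :
    ∑ a, ∑ b, ∑ c, ∑ d, f a b c d = ∑ c, ∑ d, ∑ a, ∑ b, f a b c d :=
  calc ∑ a, ∑ b, ∑ c, ∑ d, f a b c d
      = ∑ a, ∑ c, ∑ b, ∑ d, f a b c d := Finset.sum_congr rfl fun _ _ => Finset.sum_comm
    _ = ∑ c, ∑ a, ∑ d, ∑ b, f a b c d :=
      Finset.sum_comm.trans <|
        Finset.sum_congr rfl fun _ _ => Finset.sum_congr rfl fun _ _ => Finset.sum_comm
    _ = ∑ c, ∑ d, ∑ a, ∑ b, f a b c d := Finset.sum_congr rfl fun _ _ => Finset.sum_comm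

theorem Nat.eq_sum_Icc_of_eq_add_succ {M : Type*} [AddCommMonoid M] {a b : ℕ → M} {H : ℕ}
    (hH : a H = b H) (hsucc : ∀ t < H, a t = b t + a (t + 1)) {t : ℕ} (ht : t ≤ H) :
    a t = ∑ t' ∈ Icc t H, b t' := by
  induction ht using Nat.decreasingInduction with
  | self => simp [hH]
  | of_succ t htH ih => rw [hsucc t htH, ih, Icc_add_one_left_eq_Ioc, add_sum_Ioc_eq_sum_Icc htH.le]

theorem sum_count_mul_bellman {S A : Type*} [Fintype S] [Fintype A]
    (n : S → A → ℝ) (N : S → A → S → ℝ) (n' pol r W : S → A → ℝ)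
    (hn : ∀ i j, n i j ≠ 0) (hn' : ∀ i' j', n' i' j' = (∑ i, ∑ j, N i j i') * pol i' j') :
    ∑ i, ∑ j, n i j * (r i j + ∑ i', ∑ j', N i j i' / n i j * pol i' j' * W i' j')
      = ∑ i, ∑ j, n i j * r i j + ∑ i', ∑ j', n' i' j' * W i' j' := by
  have hcancel : ∀ i j, n i j * ∑ i', ∑ j', N i j i' / n i j * pol i' j' * W i' j'
      = ∑ i', ∑ j', N i j i' * pol i' j' * W i' j' := fun i j => by
    simp only [mul_sum, div_mul_eq_mul_div, mul_div_assoc', mul_div_cancel_left₀ _ (hn i j)]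
  simp only [mul_add, sum_add_distrib, hcancel, hn', sum_mul]
  rw [Fintype.sum_sum_sum_sum_comm]

theorem stmt16_general {S A : Type*} [Fintype S] [Fintype A] (H : ℕ)
    (n1 : ℕ → S → ℝ) (n2 : ℕ → S → A → ℝ) (n3 : ℕ → S → A → S → ℝ)
    (φ : ℕ → S → A → S → ℝ) (pol : ℕ → S → A → ℝ)
    (r : ℕ → S → A → ℝ) (V : ℕ → S → A → ℝ)
    (hn2pos : ∀ t i j, 0 < n2 t i j)
    (hmarg2 : ∀ t i', n1 (t + 1) i' = ∑ i, ∑ j, n3 t i j i')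
    (hpol : ∀ t i' j', n2 (t + 1) i' j' = n1 (t + 1) i' * pol (t + 1) i' j')
    (hφ : ∀ t i j i', φ t i j i' = n3 t i j i' / n2 t i j)
    (hVH : ∀ i j, V H i j = r H i j)
    (hV : ∀ t < H, ∀ i j,
      V t i j = r t i j
        + ∑ i', ∑ j', φ t i j i' * pol (t + 1) i' j' * V (t + 1) i' j')
    (t : ℕ) (ht : t ≤ H) :
    ∑ i, ∑ j, n2 t i j * V t i j
      = ∑ t' ∈ Finset.Icc t H, ∑ i, ∑ j, n2 t' i j * r t' i j := by
  refine Nat.eq_sum_Icc_of_eq_add_succ (a := fun t => ∑ i, ∑ j, n2 t i j * V t i j)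
    (by simp only [hVH]) (fun t htH => ?_) ht
  simp only [hV t htH, hφ]
  exact sum_count_mul_bellman _ _ _ _ _ _ (fun i j => (hn2pos t i j).ne')
    (fun i' j' => by rw [hpol, hmarg2])

theorem stmt16 {S A : Type*} [Fintype S] [Fintype A] (H : ℕ)
    (n1 : ℕ → S → ℝ) (n2 : ℕ → S → A → ℝ) (n3 : ℕ → S → A → S → ℝ)
    (φ : ℕ → S → A → S → ℝ) (pol : ℕ → S → A → ℝ)
    (r : ℕ → S → A → ℝ) (V : ℕ → S → A → ℝ)
    (hn2pos : ∀ t i j, 0 < n2 t i j)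
    (hmarg1 : ∀ t i j, n2 t i j = ∑ i', n3 t i j i')
    (hmarg2 : ∀ t i', n1 (t + 1) i' = ∑ i, ∑ j, n3 t i j i')
    (hpol : ∀ t i' j', n2 (t + 1) i' j' = n1 (t + 1) i' * pol (t + 1) i' j')
    (hφ : ∀ t i j i', φ t i j i' = n3 t i j i' / n2 t i j)
    (hVH : ∀ i j, V H i j = r H i j)
    (hV : ∀ t < H, ∀ i j,
      V t i j = r t i j
        + ∑ i', ∑ j', φ t i j i' * pol (t + 1) i' j' * V (t + 1) i' j')
    (t : ℕ) (ht : t ≤ H) :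
    ∑ i, ∑ j, n2 t i j * V t i j
      = ∑ t' ∈ Finset.Icc t H, ∑ i, ∑ j, n2 t' i j * r t' i j :=
  stmt16_general H n1 n2 n3 φ pol r V hn2pos hmarg2 hpol hφ hVH hV t ht
end
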